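/- (Piecewise formula for CR_b, from the proof of Lemma 2.) Fix an integer n ≥ 1, σ > 0, α ∈ (0,1), θ > 0 and ν ≥ 0, and let μ = N(θ, σ²/n). Then μ({x ∈ ℝ : |x − θ| < z_{α/2}·σ/√n and |x| > ν}) = CR_b(θ, ν), where CR_b(θ, ν) = (P_s(θ,ν) − α)·1{ν < z_{α/2}σ/√n} if θ < |ν − z_{α/2}σ/√n|; CR_b(θ, ν) = 1 − α/2 − Φ(√n(ν − θ)/σ) if |ν − z_{α/2}σ/√n| ≤ θ ≤ ν + z_{α/2}σ/√n; and CR_b(θ, ν) = 1 − α if θ > ν + z_{α/2}σ/√n. -/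

import Mathlib

open MeasureTheory ProbabilityTheory

/-- The standard normal cumulative distribution function. -/
noncomputable def Phi (x : ℝ) : ℝ := (gaussianReal 0 1 (Set.Iic x)).toReal

/-- P_s(θ,ν) = Φ(√n(θ − ν)/σ) + Φ(√n(−θ − ν)/σ). -/
noncomputable def Ps (n : ℕ) (σ θ ν : ℝ) : ℝ :=
  Phi (Real.sqrt n * (θ - ν) / σ) + Phi (Real.sqrt n * (-θ - ν) / σ)

/-- σ̃(θ) = (1 + λ/θ²)⁻¹ σ for θ ≠ 0, with the convention σ̃(0) = 0. -/
noncomputable def sigTilde (lam σ θ : ℝ) : ℝ :=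
  if θ = 0 then 0 else (1 + lam / θ ^ 2)⁻¹ * σ

open Classical in
/-- The piecewise function CR_a(θ,ν); here `za` denotes the quantile z_{α/2}. -/
noncomputable def CRa (n : ℕ) (σ lam za θ ν : ℝ) : ℝ :=
  if θ < |ν - za * sigTilde lam σ θ / Real.sqrt n| then
    (Ps n σ θ ν - 2 * Phi (-(za * sigTilde lam σ θ / σ))) *
      (if ν < za * sigTilde lam σ θ / Real.sqrt n then 1 else 0)
  else if θ ≤ ν + za * sigTilde lam σ θ / Real.sqrt n then
    Phi (za * sigTilde lam σ θ / σ) - Phi (Real.sqrt n * (ν - θ) / σ)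
  else 1 - 2 * Phi (-(za * sigTilde lam σ θ / σ))

open Classical in
/-- The piecewise function CR_b(θ,ν); here `za` denotes the quantile z_{α/2}. -/
noncomputable def CRb (n : ℕ) (σ α za θ ν : ℝ) : ℝ :=
  if θ < |ν - za * σ / Real.sqrt n| then
    (Ps n σ θ ν - α) * (if ν < za * σ / Real.sqrt n then 1 else 0)
  else if θ ≤ ν + za * σ / Real.sqrt n then
    1 - α / 2 - Phi (Real.sqrt n * (ν - θ) / σ)
  else 1 - α

/-! With `c = z * s`, the event is the disjoint union of `(θ - c, min (θ + c) (-ν))` and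
`(max (θ - c) ν, θ + c)`, and under `N(θ, s²)` an interval `(a, b)` has probability
`Φ((b - θ)/s) - Φ((a - θ)/s)`. The three regimes of `CR_b` are exactly the ways these two
intervals degenerate: the left one is empty unless `θ < c - ν`, the right one is empty once
`θ + c ≤ ν`, and it is all of `(θ - c, θ + c)` once `θ > ν + c`. The symmetry
`Φ(-x) = 1 - Φ(x)` turns the resulting differences into the stated closed forms. -/

open Set

lemma measureReal_Ioo_eq_measureReal_Iic_sub {μ : Measure ℝ} [IsFiniteMeasure μ]
    [NullSingletonClass μ] {a b : ℝ} (hab : a ≤ b) :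
    μ.real (Ioo a b) = μ.real (Iic b) - μ.real (Iic a) := by
  rw [measureReal_congr Ioo_ae_eq_Ioc, ← Iic_sdiff_Iic,
    measureReal_sdiff (Iic_subset_Iic.mpr hab) measurableSet_Iic]

lemma Phi_mono : Monotone Phi := fun _ _ hxy => measureReal_mono (Iic_subset_Iic.mpr hxy)

lemma Phi_neg (x : ℝ) : Phi (-x) = 1 - Phi x := by
  have := nullSingletonClass_gaussianReal (μ := 0) one_ne_zero
  have hsymm : (gaussianReal (0 : ℝ) 1).map (fun y => -y) = gaussianReal 0 1 := by
    rw [gaussianReal_map_neg, neg_zero]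
  have hpre : (fun y : ℝ => -y) ⁻¹' Iic (-x) = Ici x := by ext; simp
  calc Phi (-x) = (gaussianReal (0 : ℝ) 1).real (Ici x) := by
        rw [Phi, ← measureReal_def, ← hsymm,
          map_measureReal_apply (by fun_prop) measurableSet_Iic, hpre, hsymm]
    _ = 1 - Phi x := by
        rw [← measureReal_congr Ioi_ae_eq_Ici, ← compl_Iic, measureReal_compl measurableSet_Iic,
          probReal_univ, Phi, measureReal_def]

lemma Phi_zero : Phi 0 = 1 / 2 := by
  linarith [neg_zero (G := ℝ) ▸ Phi_neg 0]

lemma pos_of_Phi_neg_lt_half {z : ℝ} (hz : Phi (-z) < 1 / 2) : 0 < z := by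
  by_contra! h
  linarith [Phi_mono (neg_nonneg.mpr h), Phi_zero]

lemma gaussianReal_real_Iic (θ : ℝ) {s : ℝ} (hs : 0 < s) (x : ℝ) :
    (gaussianReal θ (s ^ 2).toNNReal).real (Iic x) = Phi ((x - θ) / s) := by
  have hstd :
      (gaussianReal θ (s ^ 2).toNNReal).map (fun y => (y - θ) / s) = gaussianReal 0 1 := by
    rw [show (fun y => (y - θ) / s) = (· / s) ∘ (· - θ) from rfl,
      ← Measure.map_map (by fun_prop) (by fun_prop), gaussianReal_map_sub_const,
      gaussianReal_map_div_const]
    congr 1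
    · simp
    · ext; simp [hs.ne', (sq_pos_of_pos hs).le]
  have hpre : (fun y => (y - θ) / s) ⁻¹' Iic ((x - θ) / s) = Iic x := by
    ext y; simp [div_le_div_iff_of_pos_right hs]
  rw [Phi, ← measureReal_def, ← hstd, map_measureReal_apply (by fun_prop) measurableSet_Iic,
    hpre]

lemma gaussianReal_real_Ioo (θ : ℝ) {s : ℝ} (hs : 0 < s) {a b : ℝ} (hab : a ≤ b) :
    (gaussianReal θ (s ^ 2).toNNReal).real (Ioo a b)
      = Phi ((b - θ) / s) - Phi ((a - θ) / s) := by
  have := nullSingletonClass_gaussianReal (μ := θ) (v := (s ^ 2).toNNReal) (by simp [hs.ne'])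
  rw [measureReal_Ioo_eq_measureReal_Iic_sub hab, gaussianReal_real_Iic θ hs,
    gaussianReal_real_Iic θ hs]

lemma setOf_abs_sub_lt_and_lt_abs (θ c ν : ℝ) :
    {x : ℝ | |x - θ| < c ∧ ν < |x|}
      = Ioo (θ - c) (min (θ + c) (-ν)) ∪ Ioo (max (θ - c) ν) (θ + c) := by
  ext x
  simp only [mem_ofPred_eq, mem_union, mem_Ioo, abs_sub_lt_iff, lt_abs, lt_min_iff, max_lt_iff]
  constructor
  · rintro ⟨⟨h₁, h₂⟩, h | h⟩
    · exact .inr ⟨⟨by linarith, h⟩, by linarith⟩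
    · exact .inl ⟨by linarith, by linarith, by linarith⟩
  · rintro (⟨h₁, h₂, h₃⟩ | ⟨⟨h₁, h₂⟩, h₃⟩)
    · exact ⟨⟨by linarith, by linarith⟩, .inr (by linarith)⟩
    · exact ⟨⟨by linarith, by linarith⟩, .inl h₂⟩

lemma measureReal_setOf_abs_sub_lt_and_lt_abs (μ : Measure ℝ) [IsFiniteMeasure μ]
    (θ c : ℝ) {ν : ℝ} (hν : 0 ≤ ν) :
    μ.real {x : ℝ | |x - θ| < c ∧ ν < |x|}
      = μ.real (Ioo (θ - c) (min (θ + c) (-ν))) + μ.real (Ioo (max (θ - c) ν) (θ + c)) := by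
  refine setOf_abs_sub_lt_and_lt_abs θ c ν ▸ measureReal_union ?_ measurableSet_Ioo
  refine disjoint_left.mpr fun x h₁ h₂ => ?_
  linarith [h₁.2, h₂.1, min_le_right (θ + c) (-ν), le_max_right (θ - c) ν]

lemma gaussianReal_real_setOf_abs_sub_lt_and_lt_abs {θ s z ν : ℝ} (hθ : 0 ≤ θ) (hs : 0 < s)
    (hz : 0 < z) (hν : 0 ≤ ν) :
    (gaussianReal θ (s ^ 2).toNNReal).real {x : ℝ | |x - θ| < z * s ∧ ν < |x|}
      = if θ < |ν - z * s| then
          (Phi ((θ - ν) / s) + Phi ((-θ - ν) / s) - 2 * Phi (-z)) *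
            (if ν < z * s then 1 else 0)
        else if θ ≤ ν + z * s then Phi z - Phi ((ν - θ) / s)
        else 1 - 2 * Phi (-z) := by
  have hc : 0 < z * s := mul_pos hz hs
  have hhi : (θ + z * s - θ) / s = z := by field_simp; ring
  have hlo : (θ - z * s - θ) / s = -z := by field_simp; ring
  have hPhi_reflect (a : ℝ) : Phi ((a - θ) / s) = 1 - Phi ((θ - a) / s) := by
    rw [← Phi_neg, ← neg_div, neg_sub]
  have hlow_empty (h : z * s - ν ≤ θ) : Ioo (θ - z * s) (min (θ + z * s) (-ν)) = ∅ :=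
    Ioo_eq_empty_of_le (by linarith [min_le_right (θ + z * s) (-ν)])
  rw [measureReal_setOf_abs_sub_lt_and_lt_abs _ _ _ hν]
  split_ifs with h₁ h₂ h₃
  · rw [abs_of_neg (by linarith), neg_sub] at h₁
    rw [min_eq_right (by linarith), max_eq_right (by linarith),
      gaussianReal_real_Ioo θ hs (by linarith), gaussianReal_real_Ioo θ hs (by linarith),
      hhi, hlo, hPhi_reflect ν, Phi_neg z, neg_sub_comm]
    ring
  · rw [abs_of_nonneg (by linarith)] at h₁
    rw [hlow_empty (by linarith), Ioo_eq_empty_of_le (by linarith [le_max_right (θ - z * s) ν])]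
    simp
  · obtain ⟨h₁l, h₁r⟩ := abs_le.mp (not_lt.mp h₁)
    rw [hlow_empty (by linarith), max_eq_right (by linarith),
      gaussianReal_real_Ioo θ hs (by linarith), hhi, measureReal_empty, zero_add]
  · rw [hlow_empty (by linarith), max_eq_left (by linarith),
      gaussianReal_real_Ioo θ hs (by linarith), hhi, hlo, measureReal_empty, zero_add, Phi_neg z]
    ring

/-- piecewise formula for CR_b: the N(θ, σ²/n)-probability of the event
{|x − θ| < z_{α/2}σ/√n and |x| > ν} equals CR_b(θ, ν). -/
theorem CRb_eq_prob (n : ℕ) (hn : 1 ≤ n) (σ α za θ ν : ℝ)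
    (hσ : 0 < σ) (hα : α ∈ Set.Ioo (0:ℝ) 1)
    (hza : Phi (-za) = α / 2) (hθ : 0 < θ) (hν : 0 ≤ ν) :
    ((gaussianReal θ (Real.toNNReal (σ^2 / n)))
        {x : ℝ | |x - θ| < za * σ / Real.sqrt n ∧ ν < |x|}).toReal
      = CRb n σ α za θ ν := by
  have hn₀ : (0 : ℝ) < n := by exact_mod_cast hn
  set s := σ / √n with hs_def
  have hc : za * σ / √n = za * s := mul_div_assoc ..
  have hvar : (σ ^ 2 / n).toNNReal = (s ^ 2).toNNReal := by rw [div_pow, Real.sq_sqrt hn₀.le]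
  have hstd (a : ℝ) : √n * a / σ = a / s := by rw [hs_def]; field_simp
  have hPhi_za : Phi za = 1 - α / 2 := by linarith [Phi_neg za]
  have h2za : 2 * Phi (-za) = α := by rw [hza]; ring
  rw [← measureReal_def, hvar, hc, gaussianReal_real_setOf_abs_sub_lt_and_lt_abs hθ.le
    (by positivity) (pos_of_Phi_neg_lt_half (by linarith [hα.2])) hν]
  simp only [CRb, Ps, hc, hstd, h2za, hPhi_za]
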